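/- arXiv:2403.16006 — 4 statements merged into one kernel-verified Lean document; each statement's English description precedes it below -/
import Mathlib

section
/- For the type-III piecewise fractional kernel h₃ with parameters κ > 0 and d ∈ (1/2,1), the tail integral H₃(x) := ∫₀ˣ h₃(v) dv equals x^d/Γ(d+1) if x < (1−d)/κ, and equals ((1−d)/κ)^d (1 − d e^{1−d−κx})/((1−d)Γ(d+1)) if x ≥ (1−d)/κ. -/
open MeasureTheory Real Set

/-- The type-III piecewise fractional kernel. -/
noncomputable def h3 (κ d v : ℝ) : ℝ :=
  if v < (1 - d) / κ then
    (v ^ (d - 1) - ((1 - d) / κ) ^ (d - 1)) / Real.Gamma d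
      - κ ^ (1 - d) / ((1 - d) ^ (2 - d) * Real.Gamma (d - 1))
  else
    -(Real.exp (1 - d - κ * v) * ((1 - d) / κ) ^ (d - 1)) / ((1 - d) * Real.Gamma (d - 1))

/-! On `v ≤ c := (1 - d)/κ` the constants of `h₃` cancel, because `(1 - d) Γ(d - 1) = -Γ(d)`
and `c^(d-1) = κ^(1-d) / (1 - d)^(1-d)`, so that `h₃(v) = v^(d-1)/Γ(d)`; on `v ≥ c` the same
identity gives `h₃(v) = c^(d-1) e^(1-d-κv)/Γ(d)`. Integrating the power up to `c` and the
exponential from `c`, and using `κ c = 1 - d`, gives the formula. -/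

open intervalIntegral

lemma Real.one_sub_mul_Gamma_sub_one {d : ℝ} (hd : d ≠ 1) :
    (1 - d) * Gamma (d - 1) = -Gamma d := by
  have h := Real.Gamma_add_one (sub_ne_zero.mpr hd)
  rw [sub_add_cancel] at h
  rw [h]
  ring

lemma integral_exp_sub_mul {κ : ℝ} (hκ : κ ≠ 0) (s a b : ℝ) :
    ∫ v in a..b, exp (s - κ * v) = (exp (s - κ * a) - exp (s - κ * b)) / κ := by
  rw [integral_comp_sub_mul (fun v => exp v) hκ, integral_exp, smul_eq_mul, inv_mul_eq_div]

lemma integral_rpow_sub_one_of_zero {d : ℝ} (hd : 0 < d) (x : ℝ) :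
    ∫ v in (0 : ℝ)..x, v ^ (d - 1) = x ^ d / d := by
  rw [integral_rpow (Or.inl (by linarith)), sub_add_cancel, zero_rpow hd.ne', sub_zero]

section h3

variable {κ d v : ℝ}

lemma h3_of_lt (hκ : 0 ≤ κ) (hd : d < 1) (hv : v < (1 - d) / κ) :
    h3 κ d v = v ^ (d - 1) / Gamma d := by
  have h1d : 0 < 1 - d := sub_pos.mpr hd
  have hconst : κ ^ (1 - d) / ((1 - d) ^ (2 - d) * Gamma (d - 1))
      = -(((1 - d) / κ) ^ (d - 1) / Gamma d) := by
    calc κ ^ (1 - d) / ((1 - d) ^ (2 - d) * Gamma (d - 1))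
        = κ ^ (1 - d) / (1 - d) ^ (1 - d) / ((1 - d) * Gamma (d - 1)) := by
          rw [div_div, show 2 - d = (1 - d) + 1 by ring, rpow_add_one h1d.ne', mul_assoc]
      _ = -(((1 - d) / κ) ^ (d - 1) / Gamma d) := by
          rw [Real.one_sub_mul_Gamma_sub_one hd.ne, div_neg, div_rpow h1d.le hκ,
            show d - 1 = -(1 - d) by ring, rpow_neg h1d.le, rpow_neg hκ, inv_div_inv]
  rw [h3, if_pos hv, hconst]
  ring

lemma h3_of_ge (hd : d ≠ 1) (hv : (1 - d) / κ ≤ v) :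
    h3 κ d v = ((1 - d) / κ) ^ (d - 1) * exp (1 - d - κ * v) / Gamma d := by
  rw [h3, if_neg hv.not_gt, Real.one_sub_mul_Gamma_sub_one hd, neg_div_neg_eq, mul_comm]

lemma h3_of_le (hκ : 0 < κ) (hd : d < 1) (hv : v ≤ (1 - d) / κ) :
    h3 κ d v = v ^ (d - 1) / Gamma d := by
  rcases hv.lt_or_eq with hv | rfl
  · exact h3_of_lt hκ.le hd hv
  · rw [h3_of_ge hd.ne le_rfl, mul_div_cancel₀ _ hκ.ne', sub_self, exp_zero, mul_one]

lemma intervalIntegrable_h3_of_le (hκ : 0 < κ) (hd : d ∈ Ioo 0 1) {a b : ℝ}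
    (ha : a ≤ (1 - d) / κ) (hb : b ≤ (1 - d) / κ) :
    IntervalIntegrable (h3 κ d) volume a b := by
  have hpow : IntervalIntegrable (fun v => v ^ (d - 1) / Gamma d) volume a b :=
    (intervalIntegrable_rpow' (by linarith [hd.1])).div_const _
  refine hpow.congr fun v hv => ?_
  exact (h3_of_le hκ hd.2 ((uIoc_subset_uIcc hv).2.trans (max_le ha hb))).symm

lemma integral_h3_of_le (hκ : 0 < κ) (hd : d ∈ Ioo 0 1) {x : ℝ} (hx : x ≤ (1 - d) / κ) :
    ∫ v in (0 : ℝ)..x, h3 κ d v = x ^ d / Gamma (d + 1) := by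
  have hc : 0 ≤ (1 - d) / κ := div_nonneg (by linarith [hd.2]) hκ.le
  rw [integral_congr fun v hv => h3_of_le hκ hd.2 (hv.2.trans (max_le hc hx)),
    intervalIntegral.integral_div, integral_rpow_sub_one_of_zero hd.1, Gamma_add_one hd.1.ne',
    div_div, mul_comm]

lemma intervalIntegrable_h3_of_ge (hd : d ≠ 1) {a b : ℝ}
    (ha : (1 - d) / κ ≤ a) (hb : (1 - d) / κ ≤ b) :
    IntervalIntegrable (h3 κ d) volume a b := by
  refine (ContinuousOn.intervalIntegrable (u := fun v =>
    ((1 - d) / κ) ^ (d - 1) * exp (1 - d - κ * v) / Gamma d) (by fun_prop)).congr fun v hv => ?_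
  exact (h3_of_ge hd ((le_min ha hb).trans (uIoc_subset_uIcc hv).1)).symm

lemma integral_h3_of_ge (hκ : κ ≠ 0) (hd : d ≠ 1) {a b : ℝ}
    (ha : (1 - d) / κ ≤ a) (hb : (1 - d) / κ ≤ b) :
    ∫ v in a..b, h3 κ d v = ((1 - d) / κ) ^ (d - 1)
      * ((exp (1 - d - κ * a) - exp (1 - d - κ * b)) / κ) / Gamma d := by
  rw [integral_congr fun v hv => h3_of_ge hd ((le_min ha hb).trans hv.1),
    intervalIntegral.integral_div, intervalIntegral.integral_const_mul, integral_exp_sub_mul hκ]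

end h3

theorem stmt3_general (κ d : ℝ) (hκ : 0 < κ) (hd : d ∈ Set.Ioo (1/2 : ℝ) 1) (x : ℝ) :
    ∫ v in (0:ℝ)..x, h3 κ d v
      = if x < (1 - d) / κ then x ^ d / Real.Gamma (d + 1)
        else ((1 - d) / κ) ^ d * (1 - d * Real.exp (1 - d - κ * x))
          / ((1 - d) * Real.Gamma (d + 1)) := by
  have hd₀ : d ∈ Ioo 0 1 := ⟨by linarith [hd.1], hd.2⟩
  have hc : 0 < (1 - d) / κ := div_pos (sub_pos.mpr hd.2) hκ
  split_ifs with hxc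
  · exact integral_h3_of_le hκ hd₀ hxc.le
  have hcx : (1 - d) / κ ≤ x := not_lt.mp hxc
  rw [← integral_add_adjacent_intervals (intervalIntegrable_h3_of_le hκ hd₀ hc.le le_rfl)
      (intervalIntegrable_h3_of_ge hd.2.ne le_rfl hcx),
    integral_h3_of_le hκ hd₀ le_rfl, integral_h3_of_ge hκ.ne' hd.2.ne le_rfl hcx,
    mul_div_cancel₀ _ hκ.ne', sub_self, exp_zero, Gamma_add_one hd₀.1.ne',
    rpow_sub_one hc.ne' d]
  have h1d : 1 - d ≠ 0 := (sub_pos.mpr hd.2).ne'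
  have hΓ : Gamma d ≠ 0 := (Gamma_pos_of_pos hd₀.1).ne'
  have hd0 : d ≠ 0 := hd₀.1.ne'
  field_simp
  ring

/-- The tail integral H₃(x) = ∫₀ˣ h₃(v) dv of the type-III kernel. -/
theorem stmt3 (κ d : ℝ) (hκ : 0 < κ) (hd : d ∈ Set.Ioo (1/2 : ℝ) 1) (x : ℝ) (hx : 0 < x) :
    ∫ v in (0:ℝ)..x, h3 κ d v
      = if x < (1 - d) / κ then x ^ d / Real.Gamma (d + 1)
        else ((1 - d) / κ) ^ d * (1 - d * Real.exp (1 - d - κ * x))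
          / ((1 - d) * Real.Gamma (d + 1)) :=
  stmt3_general κ d hκ hd x
end

section
/- The tail-integrated type-III kernel H₃ is continuously differentiable on (0, ∞) and in fact twice continuously differentiable; in particular H₃ and H₃' are continuous at the junction point x = (1−d)/κ. -/
/-!
Both branches of `H₃` are smooth where they are used: `x ↦ x ^ d` on `(0, ∞)` and the
exponential branch everywhere. At the junction `x₀ = (1 - d) / κ` one has `κ x₀ = 1 - d`, so the
exponential equals `1` there, and the constants of the exponential branch are exactly those that
make its value and its first two derivatives agree with those of `x ^ d / Γ(d + 1)` at `x₀`.
Gluing `HasDerivAt` twice across `x₀` gives `H₃'` and `H₃''` explicitly on `(0, ∞)`, and `H₃''`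
is continuous there.
-/

open MeasureTheory Real Set

/-- The tail-integrated type-III kernel. -/
noncomputable def H3 (κ d x : ℝ) : ℝ :=
  if x < (1 - d) / κ then x ^ d / Real.Gamma (d + 1)
  else ((1 - d) / κ) ^ d * (1 - d * Real.exp (1 - d - κ * x)) / ((1 - d) * Real.Gamma (d + 1))

theorem ite_lt_eqOn_Iic {f g : ℝ → ℝ} {a : ℝ} (hfg : f a = g a) :
    EqOn (fun y => if y < a then f y else g y) f (Iic a) := by
  intro y hy
  rcases (mem_Iic.1 hy).lt_or_eq with hy | rfl
  · exact if_pos hy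
  · exact (if_neg (lt_irrefl y)).trans hfg.symm

theorem hasDerivAt_ite_lt {f g f' g' : ℝ → ℝ} {a b x : ℝ} (hx : b < x)
    (hf : ∀ y ∈ Ioc b a, HasDerivAt f (f' y) y) (hg : ∀ y ∈ Ici a, HasDerivAt g (g' y) y)
    (hfg : f a = g a) (hfg' : f' a = g' a) :
    HasDerivAt (fun y => if y < a then f y else g y) (if x < a then f' x else g' x) x := by
  rcases lt_trichotomy x a with h | rfl | h
  · rw [if_pos h]
    refine (hf x ⟨hx, h.le⟩).congr_of_eventuallyEq ?_
    filter_upwards [Iio_mem_nhds h] with y hy using if_pos hy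
  · rw [if_neg (lt_irrefl x)]
    have hl : HasDerivWithinAt (fun y => if y < x then f y else g y) (g' x) (Iic x) x :=
      hfg' ▸ (hf x ⟨hx, le_rfl⟩).hasDerivWithinAt.congr (ite_lt_eqOn_Iic hfg)
        (ite_lt_eqOn_Iic hfg self_mem_Iic)
    have hr : HasDerivWithinAt (fun y => if y < x then f y else g y) (g' x) (Ici x) x :=
      (hg x self_mem_Ici).hasDerivWithinAt.congr (fun y hy => if_neg (not_lt.2 hy))
        (if_neg (lt_irrefl x))
    simpa [Iic_union_Ici] using hl.union hr
  · rw [if_neg h.not_gt]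
    refine (hg x h.le).congr_of_eventuallyEq ?_
    filter_upwards [Ioi_mem_nhds h] with y hy using if_neg (not_lt.2 hy.le)

theorem continuousAt_ite_lt {f g : ℝ → ℝ} {a b x : ℝ} (hx : b < x)
    (hf : ∀ y ∈ Ioc b a, ContinuousAt f y) (hg : ∀ y ∈ Ici a, ContinuousAt g y)
    (hfg : f a = g a) : ContinuousAt (fun y => if y < a then f y else g y) x := by
  rcases lt_trichotomy x a with h | rfl | h
  · refine (hf x ⟨hx, h.le⟩).congr ?_
    filter_upwards [Iio_mem_nhds h] with y hy using (if_pos hy).symm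
  · have hl : ContinuousWithinAt (fun y => if y < x then f y else g y) (Iic x) x :=
      (hf x ⟨hx, le_rfl⟩).continuousWithinAt.congr (ite_lt_eqOn_Iic hfg)
        (ite_lt_eqOn_Iic hfg self_mem_Iic)
    have hr : ContinuousWithinAt (fun y => if y < x then f y else g y) (Ici x) x :=
      (hg x self_mem_Ici).continuousWithinAt.congr (fun y hy => if_neg (not_lt.2 hy))
        (if_neg (lt_irrefl x))
    simpa [Iic_union_Ici, continuousWithinAt_univ] using hl.union hr
  · refine (hg x h.le).congr ?_
    filter_upwards [Ioi_mem_nhds h] with y hy using (if_neg (not_lt.2 hy.le)).symm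

theorem contDiffOn_succ_of_hasDerivAt {𝕜 E : Type*} [NontriviallyNormedField 𝕜]
    [NormedAddCommGroup E] [NormedSpace 𝕜 E] {f f' : 𝕜 → E} {s : Set 𝕜} {n : ℕ}
    (hs : IsOpen s) (hf : ∀ x ∈ s, HasDerivAt f (f' x) x) (hf' : ContDiffOn 𝕜 n f' s) :
    ContDiffOn 𝕜 (n + 1) f s :=
  (contDiffOn_succ_iff_deriv_of_isOpen hs).2
    ⟨fun x hx => (hf x hx).differentiableAt.differentiableWithinAt, by simp,
      hf'.congr fun x hx => (hf x hx).deriv⟩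

noncomputable def H3Deriv (κ d x : ℝ) : ℝ :=
  if x < (1 - d) / κ then d * x ^ (d - 1) / Gamma (d + 1)
  else ((1 - d) / κ) ^ d * (d * κ * exp (1 - d - κ * x)) / ((1 - d) * Gamma (d + 1))

noncomputable def H3Deriv2 (κ d x : ℝ) : ℝ :=
  if x < (1 - d) / κ then d * (d - 1) * x ^ (d - 2) / Gamma (d + 1)
  else -(((1 - d) / κ) ^ d * (d * κ ^ 2 * exp (1 - d - κ * x)) / ((1 - d) * Gamma (d + 1)))

section
variable {κ d : ℝ}

lemma exp_sub_mul_div_self (hκ : κ ≠ 0) : exp (1 - d - κ * ((1 - d) / κ)) = 1 := by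
  rw [mul_div_cancel₀ _ hκ, sub_self, exp_zero]

lemma H3_branches_agree (hκ : κ ≠ 0) (hd : d ≠ 1) :
    ((1 - d) / κ) ^ d / Gamma (d + 1) =
      ((1 - d) / κ) ^ d * (1 - d * exp (1 - d - κ * ((1 - d) / κ))) /
        ((1 - d) * Gamma (d + 1)) := by
  have : 1 - d ≠ 0 := sub_ne_zero.2 (Ne.symm hd)
  rw [exp_sub_mul_div_self hκ, mul_one, ← div_div, mul_div_cancel_right₀ _ this]

lemma H3Deriv_branches_agree (hκ : κ ≠ 0) (hd : d ≠ 1) :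
    d * ((1 - d) / κ) ^ (d - 1) / Gamma (d + 1) =
      ((1 - d) / κ) ^ d * (d * κ * exp (1 - d - κ * ((1 - d) / κ))) /
        ((1 - d) * Gamma (d + 1)) := by
  have : 1 - d ≠ 0 := sub_ne_zero.2 (Ne.symm hd)
  rw [exp_sub_mul_div_self hκ, rpow_sub_one (div_ne_zero this hκ), ← div_div]
  congr 1
  field_simp

lemma H3Deriv2_branches_agree (hκ : κ ≠ 0) (hd : d ≠ 1) :
    d * (d - 1) * ((1 - d) / κ) ^ (d - 2) / Gamma (d + 1) =
      -(((1 - d) / κ) ^ d * (d * κ ^ 2 * exp (1 - d - κ * ((1 - d) / κ))) /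
        ((1 - d) * Gamma (d + 1))) := by
  have : 1 - d ≠ 0 := sub_ne_zero.2 (Ne.symm hd)
  rw [exp_sub_mul_div_self hκ, show d - 2 = d - 1 - 1 by ring, rpow_sub_one (div_ne_zero this hκ),
    rpow_sub_one (div_ne_zero this hκ), ← div_div, ← neg_div]
  congr 1
  field_simp
  ring

lemma hasDerivAt_exp_sub_mul (c κ y : ℝ) :
    HasDerivAt (fun x => exp (c - κ * x)) (-κ * exp (c - κ * y)) y :=
  ((((hasDerivAt_id y).const_mul κ).const_sub c).exp).congr_deriv (by simp only [id]; ring)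

lemma hasDerivAt_H3 (hκ : κ ≠ 0) (hd : d ≠ 1) {x : ℝ} (hx : 0 < x) :
    HasDerivAt (H3 κ d) (H3Deriv κ d x) x := by
  refine hasDerivAt_ite_lt (f := fun x => x ^ d / Gamma (d + 1))
    (g := fun x => ((1 - d) / κ) ^ d * (1 - d * exp (1 - d - κ * x)) / ((1 - d) * Gamma (d + 1)))
    (f' := fun x => d * x ^ (d - 1) / Gamma (d + 1))
    (g' := fun x => ((1 - d) / κ) ^ d * (d * κ * exp (1 - d - κ * x)) / ((1 - d) * Gamma (d + 1)))
    hx (fun y hy => ?_) (fun y _ => ?_) (H3_branches_agree hκ hd) (H3Deriv_branches_agree hκ hd)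
  · exact (hasDerivAt_rpow_const (Or.inl hy.1.ne')).div_const _
  · exact ((((hasDerivAt_exp_sub_mul _ κ y).const_mul d).const_sub 1).const_mul _).div_const _
      |>.congr_deriv (by ring)

lemma hasDerivAt_H3Deriv (hκ : κ ≠ 0) (hd : d ≠ 1) {x : ℝ} (hx : 0 < x) :
    HasDerivAt (H3Deriv κ d) (H3Deriv2 κ d x) x := by
  refine hasDerivAt_ite_lt (f := fun x => d * x ^ (d - 1) / Gamma (d + 1))
    (g := fun x => ((1 - d) / κ) ^ d * (d * κ * exp (1 - d - κ * x)) / ((1 - d) * Gamma (d + 1)))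
    (f' := fun x => d * (d - 1) * x ^ (d - 2) / Gamma (d + 1))
    (g' := fun x =>
      -(((1 - d) / κ) ^ d * (d * κ ^ 2 * exp (1 - d - κ * x)) / ((1 - d) * Gamma (d + 1))))
    hx (fun y hy => ?_) (fun y _ => ?_) (H3Deriv_branches_agree hκ hd)
    (H3Deriv2_branches_agree hκ hd)
  · rw [show d - 2 = d - 1 - 1 by ring]
    exact ((hasDerivAt_rpow_const (Or.inl hy.1.ne')).const_mul d).div_const _
      |>.congr_deriv (by ring)
  · exact (((hasDerivAt_exp_sub_mul _ κ y).const_mul (d * κ)).const_mul _).div_const _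
      |>.congr_deriv (by ring)

lemma continuousOn_H3Deriv2 (hκ : κ ≠ 0) (hd : d ≠ 1) : ContinuousOn (H3Deriv2 κ d) (Ioi 0) :=
  fun x hx => ContinuousAt.continuousWithinAt <|
    continuousAt_ite_lt (f := fun x => d * (d - 1) * x ^ (d - 2) / Gamma (d + 1))
      (g := fun x =>
        -(((1 - d) / κ) ^ d * (d * κ ^ 2 * exp (1 - d - κ * x)) / ((1 - d) * Gamma (d + 1))))
      hx (fun y hy => ((continuousAt_rpow_const _ _ (Or.inl hy.1.ne')).const_mul _).div_const _)
      (fun y _ => by fun_prop) (H3Deriv2_branches_agree hκ hd)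

lemma contDiffOn_H3 (hκ : κ ≠ 0) (hd : d ≠ 1) : ContDiffOn ℝ 2 (H3 κ d) (Ioi 0) :=
  contDiffOn_succ_of_hasDerivAt (n := 1) isOpen_Ioi (fun _ hx => hasDerivAt_H3 hκ hd hx) <|
    contDiffOn_succ_of_hasDerivAt (n := 0) isOpen_Ioi (fun _ hx => hasDerivAt_H3Deriv hκ hd hx) <|
      contDiffOn_zero.2 (continuousOn_H3Deriv2 hκ hd)

end

/-- H₃ is twice continuously differentiable on (0,∞); in particular H₃ and H₃' are
continuous at the junction point x = (1−d)/κ. -/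
theorem stmt4 (κ d : ℝ) (hκ : 0 < κ) (hd : d ∈ Set.Ioo (1/2 : ℝ) 1) :
    ContDiffOn ℝ 2 (H3 κ d) (Set.Ioi 0)
      ∧ ContinuousAt (H3 κ d) ((1 - d) / κ)
      ∧ ContinuousAt (deriv (H3 κ d)) ((1 - d) / κ) := by
  have hC2 := contDiffOn_H3 hκ.ne' hd.2.ne
  have hx₀ : Ioi (0 : ℝ) ∈ nhds ((1 - d) / κ) :=
    isOpen_Ioi.mem_nhds (div_pos (sub_pos.2 hd.2) hκ)
  exact ⟨hC2, hC2.continuousOn.continuousAt hx₀,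
    (hC2.continuousOn_deriv_of_isOpen isOpen_Ioi (by norm_num)).continuousAt hx₀⟩
end

section
/- As d → 1⁻, the tail-integrated type-III kernel H₃(x) converges pointwise for every x > 0 to H₀(x) = (1 − e^{-κx})/κ, the tail integral of the exponential kernel e^{-κv}. -/
open MeasureTheory Real Set Filter

/-- As d → 1⁻, H₃(x) → (1 − e^{-κx})/κ pointwise for every x > 0. -/
theorem stmt5 (κ : ℝ) (hκ : 0 < κ) (x : ℝ) (hx : 0 < x) :
    Tendsto (fun d : ℝ => H3 κ d x) (nhdsWithin 1 (Set.Iio 1))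
      (nhds ((1 - Real.exp (-κ * x)) / κ)) := by
  set a : ℝ := max (1 - κ * x) (1/2) with ha
  have ha1 : a < 1 := by
    apply max_lt
    · nlinarith [mul_pos hκ hx]
    · norm_num
  have hmem : Ioo a 1 ∈ nhdsWithin (1:ℝ) (Set.Iio 1) := Ioo_mem_nhdsLT ha1
  -- eventual form
  have heq : ∀ᶠ d in nhdsWithin (1:ℝ) (Set.Iio 1),
      H3 κ d x = (1 - d) ^ (d - 1) *
        ((1 - d * Real.exp (1 - d - κ * x)) / (κ ^ d * Real.Gamma (d + 1))) := by
    filter_upwards [hmem] with d hd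
    have hd1 : d < 1 := hd.2
    have hda : a < d := hd.1
    have ht : 0 < 1 - d := by linarith
    have hdpos : 0 < d := lt_trans (by norm_num : (0:ℝ) < 1/2) (lt_of_le_of_lt (le_max_right _ _) hda)
    have hG : 0 < Real.Gamma (d + 1) := Real.Gamma_pos_of_pos (by linarith)
    have hnlt : ¬ x < (1 - d) / κ := by
      rw [not_lt, div_le_iff₀ hκ]
      have : 1 - κ * x ≤ a := le_max_left _ _
      nlinarith
    rw [H3, if_neg hnlt]
    have h1 : ((1 - d) / κ) ^ d = (1 - d) ^ d / κ ^ d :=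
      Real.div_rpow ht.le hκ.le d
    have h2 : (1 - d) ^ d = (1 - d) ^ (d - 1) * (1 - d) := by
      rw [← Real.rpow_add_one ht.ne']
      ring_nf
    rw [h1, h2]
    have hκd : (κ:ℝ) ^ d ≠ 0 := (Real.rpow_pos_of_pos hκ d).ne'
    field_simp
  refine Tendsto.congr' (heq.mono fun d h => h.symm) ?_
  -- limit of (1-d)^(d-1)
  have hmap : Tendsto (fun d : ℝ => 1 - d) (nhdsWithin 1 (Set.Iio 1)) (nhdsWithin 0 (Set.Ioi 0)) := by
    apply tendsto_nhdsWithin_of_tendsto_nhds_of_eventually_within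
    · have : Tendsto (fun d : ℝ => 1 - d) (nhds 1) (nhds (1 - 1)) :=
        (tendsto_const_nhds.sub tendsto_id)
      simpa using this.mono_left nhdsWithin_le_nhds
    · filter_upwards [self_mem_nhdsWithin] with d hd
      simp only [Set.mem_Iio] at hd
      simpa using hd
  have hpow : Tendsto (fun d : ℝ => (1 - d) ^ (d - 1)) (nhdsWithin 1 (Set.Iio 1)) (nhds 1) := by
    have hlog : Tendsto (fun d : ℝ => (d - 1) * Real.log (1 - d))
        (nhdsWithin 1 (Set.Iio 1)) (nhds 0) := by
      have h := (tendsto_log_mul_rpow_nhdsGT_zero (r := 1) one_pos).comp hmap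
      have h' : Tendsto (fun d : ℝ => Real.log (1 - d) * (1 - d))
          (nhdsWithin 1 (Set.Iio 1)) (nhds 0) := by
        refine h.congr fun d => ?_
        simp [Function.comp, Real.rpow_one]
      have := h'.neg
      rw [neg_zero] at this
      refine this.congr fun d => ?_
      ring
    have := (Real.continuous_exp.tendsto 0).comp hlog
    rw [Real.exp_zero] at this
    refine Tendsto.congr' ?_ this
    filter_upwards [self_mem_nhdsWithin] with d hd
    simp only [Set.mem_Iio] at hd
    rw [Function.comp_apply, Real.rpow_def_of_pos (show (0:ℝ) < 1 - d by linarith)]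
    ring_nf
  -- limit of the second factor
  have hnum : Tendsto (fun d : ℝ => 1 - d * Real.exp (1 - d - κ * x))
      (nhdsWithin 1 (Set.Iio 1)) (nhds (1 - Real.exp (-κ * x))) := by
    have : ContinuousAt (fun d : ℝ => 1 - d * Real.exp (1 - d - κ * x)) 1 := by
      fun_prop
    have h : Tendsto (fun d : ℝ => 1 - d * Real.exp (1 - d - κ * x))
        (nhdsWithin 1 (Set.Iio 1)) (nhds (1 - 1 * Real.exp (1 - 1 - κ * x))) :=
      this.tendsto.mono_left nhdsWithin_le_nhds
    have : (1 : ℝ) - 1 * Real.exp (1 - 1 - κ * x) = 1 - Real.exp (-κ * x) := by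
      norm_num
    rwa [this] at h
  have hden : Tendsto (fun d : ℝ => κ ^ d * Real.Gamma (d + 1))
      (nhdsWithin 1 (Set.Iio 1)) (nhds κ) := by
    have hκc : ContinuousAt (fun d : ℝ => κ ^ d) 1 := Real.continuousAt_const_rpow hκ.ne'
    have hGc : ContinuousAt (fun d : ℝ => Real.Gamma (d + 1)) 1 := by
      have h2 : ContinuousAt Real.Gamma 2 := by
        refine (Real.differentiableAt_Gamma fun m => ?_).continuousAt
        have h0 : (0:ℝ) ≤ m := Nat.cast_nonneg m
        intro hcon
        have h1 : (2:ℝ) ≤ 0 := hcon.le.trans (neg_nonpos.mpr h0)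
        norm_num at h1
      have hadd : ContinuousAt (fun d : ℝ => d + 1) 1 := by fun_prop
      have h2' : ContinuousAt Real.Gamma ((1:ℝ)+1) := by norm_num; exact h2
      exact ContinuousAt.comp (f := fun d : ℝ => d + 1) h2' hadd
    have : Tendsto (fun d : ℝ => κ ^ d * Real.Gamma (d + 1)) (nhdsWithin 1 (Set.Iio 1))
        (nhds (κ ^ (1:ℝ) * Real.Gamma (1 + 1))) :=
      (hκc.mul hGc).tendsto.mono_left nhdsWithin_le_nhds
    simpa [show (1:ℝ)+1 = 2 by norm_num, Real.Gamma_two] using this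
  have := hpow.mul (hnum.div hden hκ.ne')
  simpa using this
end

section
/- For any a > 0, d ∈ (0, 1), and complex φ₁, φ₂ with Re(φ₁) > 0 and |a^d φ₂/φ₁| < 1, one has ∫₀^a log(φ₁ + s^d φ₂) ds = a [log(φ₁ + a^d φ₂) + d(₂F₁(1, 1/d; 1/d + 1; −a^d φ₂/φ₁) − 1)]. -/
/-!
With `c = φ₂ / φ₁` and `z = a ^ d * c`, both `φ₁` and `1 + s ^ d * c` (for `0 ≤ s ≤ a`) lie in the
right half-plane, so `log (φ₁ + s ^ d * φ₂) = log φ₁ + log (1 + s ^ d * c)`. The Taylor series of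
`log (1 + s ^ d * c)` is dominated by the geometric series in `‖z‖`, so it integrates termwise to
`a * ∑ (-1) ^ (n + 1) * z ^ n / (n * (d * n + 1))`. The partial fraction
`1 / (n * (d * n + 1)) = 1 / n - d / (d * n + 1)` splits this into `a * log (1 + z)` and
`a * d * ∑_{n ≥ 1} (-z) ^ n / (d * n + 1)`, and `∑ x ^ n / (d * n + 1) = ₂F₁(1, 1/d; 1/d + 1; x)`
because the Pochhammer quotient `(1/d)_n / (1/d + 1)_n` telescopes to `1 / (d * n + 1)`.
-/

open MeasureTheory Real Set Complex

/-- Gauss' hypergeometric function ₂F₁(a, b; c; z), given by its power series. -/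
noncomputable def hyp2F1 (a b c z : ℂ) : ℂ :=
  ∑' n : ℕ, ((∏ i ∈ Finset.range n, (a + i)) * (∏ i ∈ Finset.range n, (b + i))
      / (∏ i ∈ Finset.range n, (c + i))) * z ^ n / (n.factorial : ℂ)

namespace Complex

lemma re_one_add_pos_of_norm_lt_one {w : ℂ} (hw : ‖w‖ < 1) : 0 < (1 + w).re := by
  have := neg_lt_of_abs_lt ((abs_re_le_norm w).trans_lt hw)
  simp only [add_re, one_re]
  linarith

lemma log_mul_of_re_pos {x y : ℂ} (hx : 0 < x.re) (hy : 0 < y.re) :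
    log (x * y) = log x + log y := by
  have hx' := abs_lt.mp (abs_arg_lt_pi_div_two_iff.mpr (Or.inl hx))
  have hy' := abs_lt.mp (abs_arg_lt_pi_div_two_iff.mpr (Or.inl hy))
  refine log_mul (fun h => by simp [h] at hx) (fun h => by simp [h] at hy) ⟨?_, ?_⟩ <;> linarith

end Complex

lemma hyp2F1_one_eq_tsum {r : ℂ} (hr : ∀ n : ℕ, r + n ≠ 0) (x : ℂ) :
    hyp2F1 1 r (r + 1) x = ∑' n : ℕ, r / (r + n) * x ^ n := by
  refine tsum_congr fun n => ?_
  have hfac : ∏ i ∈ Finset.range n, ((1 : ℂ) + i) = n.factorial := by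
    rw [← Finset.prod_range_add_one_eq_factorial]
    push_cast
    exact Finset.prod_congr rfl fun i _ => add_comm _ _
  -- peeling the first and the last factor off `∏_{i ≤ n} (r + i)` telescopes the quotient
  have htel : (∏ i ∈ Finset.range n, (r + 1 + i)) * r
      = (∏ i ∈ Finset.range n, (r + i)) * (r + n) := by
    rw [← Finset.prod_range_succ, Finset.prod_range_succ']
    push_cast
    simp only [add_assoc, add_comm (1 : ℂ), add_zero]
  have hne : ∏ i ∈ Finset.range n, (r + 1 + i) ≠ 0 :=
    Finset.prod_ne_zero_iff.mpr fun i _ => by simpa [add_assoc, add_comm (1 : ℂ)] using hr (i + 1)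
  have hquot :
      (∏ i ∈ Finset.range n, (r + i)) / ∏ i ∈ Finset.range n, (r + 1 + i) = r / (r + n) := by
    rw [div_eq_div_iff hne (hr n)]
    linear_combination -htel
  have hfac0 : (n.factorial : ℂ) ≠ 0 := Nat.cast_ne_zero.mpr n.factorial_ne_zero
  rw [hfac, mul_div_assoc (n.factorial : ℂ), hquot]
  field_simp

lemma hasSum_hyp2F1_one {r : ℝ} (hr : 0 < r) {x : ℂ} (hx : ‖x‖ < 1) :
    HasSum (fun n : ℕ => (r : ℂ) / (r + n) * x ^ n) (hyp2F1 1 r (r + 1) x) := by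
  have hcast (n : ℕ) : (r : ℂ) + n = ((r + n : ℝ) : ℂ) := by push_cast; rfl
  rw [hyp2F1_one_eq_tsum fun n => by rw [hcast]; exact_mod_cast (by positivity : r + n ≠ 0)]
  refine (Summable.of_norm_bounded (summable_geometric_of_lt_one (norm_nonneg x) hx)
    fun n => ?_).hasSum
  rw [norm_mul, norm_pow, hcast, norm_div, norm_real, norm_real, Real.norm_of_nonneg hr.le,
    Real.norm_of_nonneg (by positivity)]
  exact mul_le_of_le_one_left (by positivity) <|
    (div_le_one (by positivity)).mpr (le_add_of_nonneg_right n.cast_nonneg)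

lemma hasSum_hyp2F1_one_div {d : ℝ} (hd : 0 < d) {x : ℂ} (hx : ‖x‖ < 1) :
    HasSum (fun n : ℕ => x ^ n / (d * n + 1)) (hyp2F1 1 (1 / d) (1 / d + 1) x) := by
  have hd' : (d : ℂ) ≠ 0 := ofReal_ne_zero.mpr hd.ne'
  convert hasSum_hyp2F1_one (one_div_pos.mpr hd) hx using 2 with n <;> push_cast
  · field_simp
    ring
  all_goals rfl

section IntegralLogOneAddRpow

variable {a d : ℝ}

lemma norm_rpow_mul_le (hd : 0 ≤ d) {s : ℝ} (hs : s ∈ Icc 0 a) (c : ℂ) :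
    ‖((s ^ d : ℝ) : ℂ) * c‖ ≤ ‖((a ^ d : ℝ) : ℂ) * c‖ := by
  rw [norm_mul, norm_mul, norm_real, norm_real, Real.norm_of_nonneg (rpow_nonneg hs.1 d),
    Real.norm_of_nonneg (rpow_nonneg (hs.1.trans hs.2) d)]
  gcongr
  exacts [hs.1, hs.2]

lemma integral_rpow_mul_pow (ha : 0 ≤ a) (hd : 0 ≤ d) (c : ℂ) (n : ℕ) :
    ∫ s in (0 : ℝ)..a, (((s ^ d : ℝ) : ℂ) * c) ^ n
      = a * (((a ^ d : ℝ) : ℂ) * c) ^ n / (d * n + 1) := by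
  have hpow : ∀ s ∈ uIcc 0 a, (((s ^ d : ℝ) : ℂ) * c) ^ n = c ^ n * ((s ^ (d * n) : ℝ) : ℂ) :=
    fun s hs => by
      rw [uIcc_of_le ha] at hs
      rw [mul_pow, ← ofReal_pow, ← rpow_natCast, ← rpow_mul hs.1, mul_comm]
  have hdn : 0 ≤ d * n := by positivity
  rw [intervalIntegral.integral_congr hpow, intervalIntegral.integral_const_mul,
    intervalIntegral.integral_ofReal, integral_rpow (Or.inl (by linarith)),
    zero_rpow (by linarith), rpow_add_one' ha (by linarith), rpow_mul ha, rpow_natCast]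
  push_cast
  ring

lemma continuousOn_log_one_add_rpow_mul (hd : 0 ≤ d) {c : ℂ} (hc : ‖((a ^ d : ℝ) : ℂ) * c‖ < 1) :
    ContinuousOn (fun s : ℝ => log (1 + ((s ^ d : ℝ) : ℂ) * c)) (Icc 0 a) := by
  have hcont : Continuous fun s : ℝ => 1 + ((s ^ d : ℝ) : ℂ) * c := by
    have hrpow := continuous_rpow_const hd
    fun_prop
  exact fun s hs => (hcont.continuousAt.clog
    (mem_slitPlane_of_norm_lt_one ((norm_rpow_mul_le hd hs c).trans_lt hc))).continuousWithinAt

lemma hasSum_integral_log_one_add_rpow_mul (ha : 0 ≤ a) (hd : 0 ≤ d) {c : ℂ}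
    (hc : ‖((a ^ d : ℝ) : ℂ) * c‖ < 1) :
    HasSum (fun n : ℕ => a * ((-1) ^ (n + 1) * (((a ^ d : ℝ) : ℂ) * c) ^ n / (n * (d * n + 1))))
      (∫ s in (0 : ℝ)..a, log (1 + ((s ^ d : ℝ) : ℂ) * c)) := by
  have hle : ∀ s ∈ uIoc 0 a, ‖((s ^ d : ℝ) : ℂ) * c‖ ≤ ‖((a ^ d : ℝ) : ℂ) * c‖ := fun s hs => by
    rw [uIoc_of_le ha] at hs
    exact norm_rpow_mul_le hd (Ioc_subset_Icc_self hs) c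
  have hrpow := continuous_rpow_const hd
  have hterms := intervalIntegral.hasSum_integral_of_dominated_convergence (μ := volume)
    (F := fun (n : ℕ) s => (-1) ^ (n + 1) * (((s ^ d : ℝ) : ℂ) * c) ^ n / n)
    (fun n _ => ‖((a ^ d : ℝ) : ℂ) * c‖ ^ n)
    (fun n => (by fun_prop : Continuous _).aestronglyMeasurable)
    (fun n => ae_of_all _ fun s hs => ?_)
    (ae_of_all _ fun _ _ => summable_geometric_of_lt_one (norm_nonneg _) hc)
    intervalIntegrable_const
    (ae_of_all _ fun s hs => hasSum_taylorSeries_log ((hle s hs).trans_lt hc))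
  · refine hterms.congr_fun fun n => ?_
    rw [intervalIntegral.integral_div, intervalIntegral.integral_const_mul,
      integral_rpow_mul_pow ha hd]
    simp only [div_eq_mul_inv, mul_inv]
    ring
  · calc ‖(-1) ^ (n + 1) * (((s ^ d : ℝ) : ℂ) * c) ^ n / n‖
        = (n : ℝ)⁻¹ * ‖((s ^ d : ℝ) : ℂ) * c‖ ^ n := by
          simp [div_eq_inv_mul]
      _ ≤ 1 * ‖((a ^ d : ℝ) : ℂ) * c‖ ^ n := by
          gcongr
          exacts [Nat.cast_inv_le_one n, hle s hs]
      _ = ‖((a ^ d : ℝ) : ℂ) * c‖ ^ n := one_mul _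

end IntegralLogOneAddRpow

-- The `if` compensates at `n = 0`, where the `/ n` terms are the junk value `0`.
lemma div_natCast_mul_add_one_eq {d : ℝ} (hd : 0 ≤ d) (z : ℂ) (n : ℕ) :
    (-1) ^ (n + 1) * z ^ n / (n * (d * n + 1)) =
      (-1) ^ (n + 1) * z ^ n / n + d * ((-z) ^ n / (d * n + 1)) - if n = 0 then (d : ℂ) else 0 := by
  rcases n with _ | n
  · simp
  have hne : ((n : ℂ) + 1) * d + 1 ≠ 0 := by
    exact_mod_cast (by positivity : (0 : ℝ) < (n + 1) * d + 1).ne'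
  push_cast
  field_simp
  ring

/-- ∫₀^a log(φ₁ + s^d φ₂) ds = a[log(φ₁ + a^d φ₂) + d(₂F₁(1, 1/d; 1/d+1; −a^d φ₂/φ₁) − 1)]. -/
theorem stmt8 (a d : ℝ) (ha : 0 < a) (hd : d ∈ Set.Ioo (0:ℝ) 1)
    (φ₁ φ₂ : ℂ) (h1 : 0 < φ₁.re)
    (hsmall : ‖((a ^ d : ℝ) : ℂ) * φ₂ / φ₁‖ < 1) :
    ∫ s in (0:ℝ)..a, Complex.log (φ₁ + ((s ^ d : ℝ) : ℂ) * φ₂)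
      = (a : ℂ) * (Complex.log (φ₁ + ((a ^ d : ℝ) : ℂ) * φ₂)
          + (d : ℂ) * (hyp2F1 1 (1 / (d : ℂ)) (1 / (d : ℂ) + 1)
              (-((a ^ d : ℝ) : ℂ) * φ₂ / φ₁) - 1)) := by
  have hd0 : 0 < d := hd.1
  have hφ₁ : φ₁ ≠ 0 := fun h => by simp [h] at h1
  set z : ℂ := ((a ^ d : ℝ) : ℂ) * (φ₂ / φ₁) with hz_def
  have hz : ‖z‖ < 1 := by rwa [hz_def, ← mul_div_assoc]
  have hsplit : ∀ s ∈ Icc 0 a, log (φ₁ + ((s ^ d : ℝ) : ℂ) * φ₂)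
      = log φ₁ + log (1 + ((s ^ d : ℝ) : ℂ) * (φ₂ / φ₁)) := fun s hs => by
    rw [← log_mul_of_re_pos h1 (re_one_add_pos_of_norm_lt_one
      ((norm_rpow_mul_le hd0.le hs _).trans_lt hz))]
    congr 1
    field_simp
  have hseries := hasSum_integral_log_one_add_rpow_mul ha.le hd0.le hz
  have hcombined := (((hasSum_taylorSeries_log hz).add
    ((hasSum_hyp2F1_one_div hd0 ((norm_neg z).trans_lt hz)).mul_left (d : ℂ))).sub
    (hasSum_ite_eq 0 (d : ℂ))).mul_left (a : ℂ)
  have hintegral := hseries.unique <| hcombined.congr_fun fun n => by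
    rw [div_natCast_mul_add_one_eq hd0.le]
  rw [intervalIntegral.integral_congr (by rwa [uIcc_of_le ha.le]),
    intervalIntegral.integral_add intervalIntegrable_const
      ((continuousOn_log_one_add_rpow_mul hd0.le hz).intervalIntegrable_of_Icc ha.le),
    intervalIntegral.integral_const, hintegral, hsplit a ⟨ha.le, le_rfl⟩,
    show -((a ^ d : ℝ) : ℂ) * φ₂ / φ₁ = -z by ring]
  simp only [sub_zero, real_smul]
  ring
end
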